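/- Let φ = (1+√5)/2 and Φ = (1-√5)/2, and let α = (α_i)_{i≥0} and β = (β_i)_{i≥0} be the real sequences with α_i = (2^i - 1)Φ + 1 and β_i = (2^i - 1)φ + 1. Then for every positive integer n, det(P_{α,β}(n)) = F(n+1), where F denotes the Fibonacci sequence with F(0) = 0, F(1) = 1. -/

import Mathlib

open Matrix

/-- Entry `P_{i,j}` of the generalized Pascal triangle associated to sequences `α`, `β`:
`P_{i,0} = α i`, `P_{0,j} = β j`, and `P_{i,j} = P_{i-1,j} + P_{i,j-1}` for `i, j ≥ 1`. -/
def pascalEntry {R : Type*} [CommRing R] (α β : ℕ → R) : ℕ → ℕ → R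
  | i, 0 => α i
  | 0, j + 1 => β (j + 1)
  | i + 1, j + 1 => pascalEntry α β i (j + 1) + pascalEntry α β (i + 1) j

/-- The generalized Pascal triangle `P_{α,β}(n)`. -/
def genPascal {R : Type*} [CommRing R] (α β : ℕ → R) (n : ℕ) :
    Matrix (Fin n) (Fin n) R :=
  Matrix.of fun i j => pascalEntry α β (i : ℕ) (j : ℕ)

/-- The Töplitz matrix `T_{α,β}(n)`: `t_{i,j} = α_{i-j}` if `i ≥ j`, else `β_{j-i}`. -/
def toeplitz {R : Type*} [CommRing R] (α β : ℕ → R) (n : ℕ) :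
    Matrix (Fin n) (Fin n) R :=
  Matrix.of fun i j => if (j : ℕ) ≤ (i : ℕ) then α ((i : ℕ) - (j : ℕ)) else β ((j : ℕ) - (i : ℕ))

/-- The unipotent lower triangular matrix `L(n)` with `L_{i,j} = C(i,j)` for `i ≥ j`. -/
def lowerL (R : Type*) [CommRing R] (n : ℕ) : Matrix (Fin n) (Fin n) R :=
  Matrix.of fun i j => if (j : ℕ) ≤ (i : ℕ) then ((i : ℕ).choose (j : ℕ) : R) else 0

/-- The binomial inverse transform `α̂_i = ∑_{k=0}^{i} (-1)^{i+k} C(i,k) α_k`. -/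
def hatSeq {R : Type*} [CommRing R] (α : ℕ → R) (i : ℕ) : R :=
  ∑ k ∈ Finset.range (i + 1), (-1 : R) ^ (i + k) * (i.choose k : R) * α k

/-- The binomial transform `α̌_i = ∑_{k=0}^{i} C(i,k) α_k`. -/
def checkSeq {R : Type*} [CommRing R] (α : ℕ → R) (i : ℕ) : R :=
  ∑ k ∈ Finset.range (i + 1), (i.choose k : R) * α k
/-!
Writing `α` and `β` as binomial transforms of `(1, ψ, ψ, …)` and `(1, φ, φ, …)`, the Pascal
recursion factors `P_{α,β}(n) = L T Lᵀ`, where `L` is the lower Pascal matrix (determinant 1)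
and `T` is the Toeplitz matrix with `1 = ψ + φ` on the diagonal, `ψ` below and `φ` above it.
Subtracting the second row of `T` from the first and expanding gives
`det T_{n+1} = φ det T_n + ψ^{n+1}`, hence
`det T_n = ∑ ψ^i φ^(n-i) = (φ^{n+1} - ψ^{n+1}) / √5 = F(n+1)`.
-/

open Finset

def toeplitzEntry {R : Type*} (α β : ℕ → R) (i j : ℕ) : R :=
  if j ≤ i then α (i - j) else β (j - i)

lemma toeplitzEntry_succ_succ {R : Type*} (α β : ℕ → R) (i j : ℕ) :
    toeplitzEntry α β (i + 1) (j + 1) = toeplitzEntry α β i j := by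
  simp [toeplitzEntry]

section PascalFactorization

variable {R : Type*} [CommRing R]

lemma pascalEntry_eq_of_rec (α β : ℕ → R) (g : ℕ → ℕ → R) (hα : ∀ i, g i 0 = α i)
    (hβ : ∀ j, g 0 (j + 1) = β (j + 1))
    (hrec : ∀ i j, g (i + 1) (j + 1) = g i (j + 1) + g (i + 1) j) (i j : ℕ) :
    pascalEntry α β i j = g i j := by
  induction i, j using pascalEntry.induct with
  | case1 i => rw [pascalEntry, hα]
  | case2 j => rw [pascalEntry, hβ]
  | case3 i j ih₁ ih₂ => rw [pascalEntry, ih₁, ih₂, hrec]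

lemma checkSeq_zero (u : ℕ → R) : checkSeq u 0 = u 0 := by
  simp [checkSeq]

lemma checkSeq_add (u w : ℕ → R) (i : ℕ) :
    checkSeq (u + w) i = checkSeq u i + checkSeq w i := by
  simp [checkSeq, mul_add, sum_add_distrib]

lemma checkSeq_succ (u : ℕ → R) (i : ℕ) :
    checkSeq u (i + 1) = checkSeq u i + checkSeq (fun k => u (k + 1)) i :=
  sum_choose_succ_mul (fun k _ => u k) i

lemma checkSeq_const (a : R) (i : ℕ) : checkSeq (fun _ => a) i = 2 ^ i * a := by
  rw [checkSeq, ← sum_mul, ← Nat.cast_sum, Nat.sum_range_choose, Nat.cast_pow, Nat.cast_two]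

lemma checkSeq_ite_zero (b : R) (i : ℕ) :
    checkSeq (fun k => if k = 0 then b else 0) i = b := by
  simp [checkSeq]

lemma sum_fin_choose_mul {n i : ℕ} (hi : i < n) (u : ℕ → R) :
    ∑ k : Fin n, (i.choose k : R) * u k = checkSeq u i := by
  rw [Fin.sum_univ_eq_sum_range (fun k => (i.choose k : R) * u k), checkSeq]
  refine (sum_subset (range_subset_range.mpr hi) fun k _ hk => ?_).symm
  rw [Nat.choose_eq_zero_of_lt (by simpa using hk), Nat.cast_zero, zero_mul]

lemma lowerL_apply {n : ℕ} (i j : Fin n) : lowerL R n i j = ((i : ℕ).choose j : R) := by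
  rw [lowerL, of_apply, ite_eq_left_iff]
  intro h
  rw [Nat.choose_eq_zero_of_lt (by omega), Nat.cast_zero]

lemma det_lowerL (n : ℕ) : (lowerL R n).det = 1 := by
  rw [det_of_isLowerTriangular _ fun i j hij => ?_]
  · simp [lowerL_apply]
  · rw [lowerL_apply, Nat.choose_eq_zero_of_lt (by exact hij), Nat.cast_zero]

lemma lowerL_mul_mul_transpose_apply {n : ℕ} (A : Matrix (Fin n) (Fin n) R)
    (t : ℕ → ℕ → R) (hA : ∀ k l : Fin n, A k l = t k l) (i j : Fin n) :
    (lowerL R n * A * (lowerL R n)ᵀ) i j = checkSeq (fun k => checkSeq (t k) j) i := by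
  simp only [mul_apply, transpose_apply, lowerL_apply, hA, sum_mul]
  rw [sum_comm, ← sum_fin_choose_mul i.isLt]
  refine sum_congr rfl fun k _ => ?_
  rw [← sum_fin_choose_mul j.isLt, mul_sum]
  exact sum_congr rfl fun l _ => by ring

lemma checkSeq_checkSeq_succ_succ (t : ℕ → ℕ → R) (ht : ∀ k l, t (k + 1) (l + 1) = t k l)
    (i j : ℕ) :
    checkSeq (fun k => checkSeq (t k) (j + 1)) (i + 1) =
      checkSeq (fun k => checkSeq (t k) (j + 1)) i +
        checkSeq (fun k => checkSeq (t k) j) (i + 1) := by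
  have hshift : (fun k => checkSeq (t (k + 1)) (j + 1)) =
      (fun k => checkSeq (t k) j) + fun k => checkSeq (t (k + 1)) j := by
    funext k
    simp only [Pi.add_apply, checkSeq_succ (t (k + 1)) j, ht, add_comm]
  rw [checkSeq_succ _ i, hshift, checkSeq_add, checkSeq_succ _ i]

theorem genPascal_checkSeq_eq {α β : ℕ → R} (h : α 0 = β 0) (n : ℕ) :
    genPascal (checkSeq α) (checkSeq β) n = lowerL R n * toeplitz α β n * (lowerL R n)ᵀ := by
  ext i j
  rw [lowerL_mul_mul_transpose_apply (toeplitz α β n) (toeplitzEntry α β) fun _ _ => rfl,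
    genPascal, of_apply]
  refine pascalEntry_eq_of_rec _ _
    (fun i j => checkSeq (fun k => checkSeq (toeplitzEntry α β k) j) i) (fun i => ?_)
    (fun j => ?_) (checkSeq_checkSeq_succ_succ _ (toeplitzEntry_succ_succ α β)) _ _
  · simp [checkSeq_zero, toeplitzEntry]
  · rw [checkSeq_zero]
    congr 1
    funext l
    cases l <;> simp [toeplitzEntry, h]

end PascalFactorization

section ToeplitzDeterminant

variable {R : Type*} [CommRing R] (a b : R)

/-- The corner entry `c` makes this family closed under the two minors that survive after
subtracting the second row from the first and expanding along the first row. -/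
def cornerToeplitz (c : R) (n : ℕ) : Matrix (Fin n) (Fin n) R :=
  Matrix.of fun i j =>
    if (i : ℕ) = j then (if (i : ℕ) = 0 then c else a + b) else if (j : ℕ) < i then a else b

lemma det_cornerToeplitz_add_two (c : R) (n : ℕ) :
    (cornerToeplitz a b c (n + 2)).det =
      (c - a) * (cornerToeplitz a b (a + b) (n + 1)).det +
        a * (cornerToeplitz a b a (n + 1)).det := by
  set W := cornerToeplitz a b c (n + 2)
  set W' := W.updateRow 0 (W 0 - W 1)
  have hW' : W'.det = W.det := by
    simpa [W', sub_eq_add_neg] using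
      det_updateRow_add_smul_self W (i := 0) (j := 1) zero_ne_one (-1)
  have h0 : W'.submatrix Fin.succ (Fin.succAbove 0) = cornerToeplitz a b (a + b) (n + 1) := by
    ext i j
    simp [W', W, cornerToeplitz]
  have h1 : W'.submatrix Fin.succ (Fin.succAbove (Fin.succ 0)) = cornerToeplitz a b a (n + 1) := by
    ext i j
    cases j using Fin.cases <;>
      simp [W', W, cornerToeplitz] <;> split_ifs <;> simp_all [Fin.pos_iff_ne_zero]
  rw [← hW', det_succ_row_zero, Fin.sum_univ_succ, Fin.sum_univ_succ, sum_eq_zero, h0, h1]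
  · simp [W', W, cornerToeplitz]
  · intro j _
    simp [W', W, cornerToeplitz]

lemma det_cornerToeplitz_self (n : ℕ) : (cornerToeplitz a b a n).det = a ^ n := by
  induction n with
  | zero => simp
  | succ n ih =>
    cases n with
    | zero => simp [cornerToeplitz]
    | succ n => rw [det_cornerToeplitz_add_two, ih]; ring

lemma det_cornerToeplitz_add_succ (n : ℕ) :
    (cornerToeplitz a b (a + b) (n + 1)).det =
      a ^ (n + 1) + b * (cornerToeplitz a b (a + b) n).det := by
  cases n with
  | zero => simp [cornerToeplitz]
  | succ n => rw [det_cornerToeplitz_add_two, det_cornerToeplitz_self]; ring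

theorem det_cornerToeplitz_add (n : ℕ) :
    (cornerToeplitz a b (a + b) n).det = ∑ i ∈ range (n + 1), a ^ i * b ^ (n - i) := by
  induction n with
  | zero => simp
  | succ n ih =>
    rw [det_cornerToeplitz_add_succ, ih, geom_sum₂_succ_eq a b (n := n + 1), Nat.add_sub_cancel]

def stepSeq (c d : R) (k : ℕ) : R := if k = 0 then c else d

lemma checkSeq_stepSeq_add (i : ℕ) : checkSeq (stepSeq (a + b) a) i = 2 ^ i * a + b := by
  have : stepSeq (a + b) a = (fun _ => a) + fun k => if k = 0 then b else 0 := by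
    funext k
    by_cases hk : k = 0 <;> simp [stepSeq, hk]
  rw [this, checkSeq_add, checkSeq_const, checkSeq_ite_zero]

lemma toeplitz_stepSeq (n : ℕ) :
    toeplitz (stepSeq (a + b) a) (stepSeq (a + b) b) n = cornerToeplitz a b (a + b) n := by
  ext i j
  simp only [toeplitz, cornerToeplitz, stepSeq, of_apply]
  split_ifs <;> first | rfl | omega

theorem det_genPascal_two_pow (n : ℕ) :
    (genPascal (fun i => 2 ^ i * a + b) (fun i => 2 ^ i * b + a) n).det =
      ∑ i ∈ range (n + 1), a ^ i * b ^ (n - i) := by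
  have hα : (fun i => 2 ^ i * a + b) = checkSeq (stepSeq (a + b) a) :=
    funext fun i => (checkSeq_stepSeq_add a b i).symm
  have hβ : (fun i => 2 ^ i * b + a) = checkSeq (stepSeq (a + b) b) :=
    funext fun i => by rw [add_comm a b, checkSeq_stepSeq_add]
  rw [hα, hβ, genPascal_checkSeq_eq (α := stepSeq (a + b) a) (β := stepSeq (a + b) b) rfl,
    det_mul, det_mul, det_transpose, det_lowerL, toeplitz_stepSeq, det_cornerToeplitz_add,
    one_mul, mul_one]

end ToeplitzDeterminant

open Real goldenRatio in
lemma fib_succ_eq_sum_goldenConj_pow_mul_goldenRatio_pow (n : ℕ) :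
    (Nat.fib (n + 1) : ℝ) = ∑ i ∈ range (n + 1), ψ ^ i * φ ^ (n - i) := by
  have h := geom_sum₂_mul ψ φ (n + 1)
  rw [Nat.add_sub_cancel] at h
  rw [coe_fib_eq, div_eq_iff (by positivity), ← goldenRatio_sub_goldenConj]
  linear_combination h

theorem det_genPascal_golden_general (n : ℕ) :
    (genPascal (fun i => ((2 : ℝ) ^ i - 1) * ((1 - Real.sqrt 5) / 2) + 1)
        (fun i => ((2 : ℝ) ^ i - 1) * ((1 + Real.sqrt 5) / 2) + 1) n).det =
      (Nat.fib (n + 1) : ℝ) := by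
  have hα : (fun i => ((2 : ℝ) ^ i - 1) * ((1 - Real.sqrt 5) / 2) + 1) =
      fun i => 2 ^ i * Real.goldenConj + Real.goldenRatio := by
    funext i; ring
  have hβ : (fun i => ((2 : ℝ) ^ i - 1) * ((1 + Real.sqrt 5) / 2) + 1) =
      fun i => 2 ^ i * Real.goldenRatio + Real.goldenConj := by
    funext i; ring
  rw [hα, hβ, det_genPascal_two_pow, fib_succ_eq_sum_goldenConj_pow_mul_goldenRatio_pow]

/-- with `φ = (1+√5)/2` and `Φ = (1-√5)/2`, for `α_i = (2^i - 1)Φ + 1`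
and `β_i = (2^i - 1)φ + 1`, `det(P_{α,β}(n)) = F(n+1)`. -/
theorem det_genPascal_golden (n : ℕ) (hn : 0 < n) :
    (genPascal (fun i => ((2 : ℝ) ^ i - 1) * ((1 - Real.sqrt 5) / 2) + 1)
        (fun i => ((2 : ℝ) ^ i - 1) * ((1 + Real.sqrt 5) / 2) + 1) n).det =
      (Nat.fib (n + 1) : ℝ) :=
  det_genPascal_golden_general n
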